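/- Let R > 0, let A : ℝ³ → ℝ³ and Φ : ℝ³ → ℝ be C^∞ on ℝ³, and let η : ℝ³ → ℝ be C^∞ with η(x) = 0 whenever |x| ≤ R. Assume ∇Φ(x) = A(x) for every x with |x| ≥ R. Fix ξ ∈ ℝ³ and set Ψ(x) = exp(i(⟨x,ξ⟩ + Φ(x)))·η(x). Then for every x ∈ ℝ³, ((D − A)²Ψ)(x) − |ξ|²Ψ(x) = exp(i(⟨x,ξ⟩ + Φ(x)))·( −2i⟨ξ, ∇η(x)⟩ − Δη(x) ); in particular the effective perturbation symbol is compactly supported in x, being supported in the support of (∇η, Δη). -/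

import Mathlib

open Real MeasureTheory Filter
open scoped RealInnerProductSpace Topology

noncomputable section

/-- `ℝ³` as a Euclidean space. -/
abbrev E3 := EuclideanSpace ℝ (Fin 3)

/-- `j`-th partial derivative of a complex-valued function on `ℝ³`. -/
def pdC (f : E3 → ℂ) (j : Fin 3) (x : E3) : ℂ := fderiv ℝ f x (EuclideanSpace.single j 1)

/-- `j`-th partial derivative of a real-valued function on `ℝ³`. -/
def pdR (f : E3 → ℝ) (j : Fin 3) (x : E3) : ℝ := fderiv ℝ f x (EuclideanSpace.single j 1)

/-- The Laplacian of a complex-valued function: the sum of its second partial derivatives. -/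
def lapC (f : E3 → ℂ) (x : E3) : ℂ := ∑ j : Fin 3, pdC (pdC f j) j x

/-- The divergence `div V = ∑ⱼ ∂Vⱼ/∂xⱼ` of a vector field on `ℝ³`. -/
def divg (V : E3 → E3) (x : E3) : ℝ := ∑ j : Fin 3, pdR (fun y => V y j) j x

/-- The magnetic Schrödinger operator `(D − A)²` with `D = −i∇`, applied to `f`:
`((D − A)²f)(x) = −Δf(x) + i (div A)(x) f(x) + 2i ⟨A(x), ∇f(x)⟩ + |A(x)|² f(x)`. -/
def hamA (A : E3 → E3) (f : E3 → ℂ) (x : E3) : ℂ :=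
  -lapC f x + Complex.I * (divg A x : ℂ) * f x
    + 2 * Complex.I * ∑ j : Fin 3, (A x j : ℂ) * pdC f j x
    + ((‖A x‖^2 : ℝ) : ℂ) * f x

/-- The Laplacian of a real-valued function: the sum of its second partial derivatives. -/
def lapR (f : E3 → ℝ) (x : E3) : ℝ := ∑ j : Fin 3, pdR (pdR f j) j x

/-!
Multiplication by the phase `e^{iθ}`, `θ(x) = ⟨x, ξ⟩ + Φ(x)`, is a gauge transformation:
`(D − A)²(e^{iθ} u) = e^{iθ} (−Δu + i (div A − Δθ) u + 2i ⟨A − ∇θ, ∇u⟩ + |A − ∇θ|² u)`.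
For `|x| > R` we have `∇θ = ξ + A` on a neighbourhood of `x`, so `A − ∇θ = −ξ` and
`div A = Δθ` at `x`, and the bracket collapses to `−Δη − 2i ⟨ξ, ∇η⟩ + |ξ|² η`.
For `|x| ≤ R`, `η` vanishes at `x` together with its first and second derivatives (on the
sphere `|x| = R` by continuity of the derivatives), so both sides vanish.
-/

theorem eqOn_fderiv_zero_of_eqOn_zero {𝕜 E F : Type*} [NontriviallyNormedField 𝕜]
    [NormedAddCommGroup E] [NormedSpace 𝕜 E] [NormedAddCommGroup F] [NormedSpace 𝕜 F]
    {f : E → F} {s : Set E} (hf : ContDiff 𝕜 1 f) (h : Set.EqOn f 0 s) :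
    Set.EqOn (fderiv 𝕜 f) 0 (closure (interior s)) := by
  refine Set.EqOn.closure (fun y hy => ?_) (hf.continuous_fderiv one_ne_zero) continuous_const
  have hloc : f =ᶠ[𝓝 y] 0 :=
    Filter.mem_of_superset (isOpen_interior.mem_nhds hy) fun z hz => h (interior_subset hz)
  simpa using hloc.fderiv_eq

section PartialDerivatives

variable {f g : E3 → ℂ} {u θ : E3 → ℝ} {j : Fin 3} {x : E3}

lemma pdC_add (hf : DifferentiableAt ℝ f x) (hg : DifferentiableAt ℝ g x) :
    pdC (fun y => f y + g y) j x = pdC f j x + pdC g j x := by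
  simp [pdC, fderiv_fun_add hf hg]

lemma pdC_mul (hf : DifferentiableAt ℝ f x) (hg : DifferentiableAt ℝ g x) :
    pdC (fun y => f y * g y) j x = pdC f j x * g x + f x * pdC g j x := by
  simp [pdC, fderiv_fun_mul hf hg]
  ring

lemma pdC_const_mul (c : ℂ) (hf : DifferentiableAt ℝ f x) :
    pdC (fun y => c * f y) j x = c * pdC f j x := by
  simp [pdC, fderiv_const_mul hf]

lemma pdC_cexp (hf : DifferentiableAt ℝ f x) :
    pdC (fun y => Complex.exp (f y)) j x = Complex.exp (f x) * pdC f j x := by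
  simp [pdC, hf.hasFDerivAt.cexp.fderiv]

lemma pdC_ofReal (hu : DifferentiableAt ℝ u x) : pdC (fun y => (u y : ℂ)) j x = pdR u j x := by
  have h : HasFDerivAt (fun y => (u y : ℂ)) (Complex.ofRealCLM.comp (fderiv ℝ u x)) x :=
    Complex.ofRealCLM.hasFDerivAt.comp x hu.hasFDerivAt
  simp [pdC, pdR, h.fderiv]

lemma pdC_cexp_I_mul (hθ : DifferentiableAt ℝ θ x) :
    pdC (fun y => Complex.exp (Complex.I * θ y)) j x
      = Complex.exp (Complex.I * θ x) * (Complex.I * pdR θ j x) := by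
  rw [pdC_cexp (by fun_prop), pdC_const_mul _ (by fun_prop), pdC_ofReal hθ]

lemma ContDiff.pdR {n : WithTop ℕ∞} (hu : ContDiff ℝ (n + 1) u) (j : Fin 3) :
    ContDiff ℝ n (pdR u j) :=
  (hu.fderiv_right le_rfl).clm_apply contDiff_const

lemma ContDiff.pdC {n : WithTop ℕ∞} (hf : ContDiff ℝ (n + 1) f) (j : Fin 3) :
    ContDiff ℝ n (pdC f j) :=
  (hf.fderiv_right le_rfl).clm_apply contDiff_const

lemma lapC_ofReal (hu : ContDiff ℝ 2 u) : lapC (fun y => (u y : ℂ)) x = lapR u x := by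
  have hfirst : ∀ j, pdC (fun y => (u y : ℂ)) j = fun y => (pdR u j y : ℂ) := fun j =>
    funext fun y => pdC_ofReal (hu.differentiable two_ne_zero y)
  simp only [lapC, lapR, hfirst, Complex.ofReal_sum]
  exact Finset.sum_congr rfl fun j _ =>
    pdC_ofReal ((hu.pdR (n := 1) j).differentiable one_ne_zero x)

lemma eqOn_pdR_zero_of_eqOn_zero_closedBall {R : ℝ} (hR : 0 < R) (hu : ContDiff ℝ 1 u)
    (h : Set.EqOn u 0 (Metric.closedBall 0 R)) (j : Fin 3) :
    Set.EqOn (pdR u j) 0 (Metric.closedBall 0 R) := by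
  intro y hy
  rw [← closure_ball _ hR.ne', ← interior_closedBall _ hR.ne'] at hy
  simp [pdR, eqOn_fderiv_zero_of_eqOn_zero hu h hy]

lemma gradient_apply_eq_pdR (u : E3 → ℝ) (x : E3) (j : Fin 3) : gradient u x j = pdR u j x := by
  have h := inner_gradient_left (f := u) (x := x) (y := EuclideanSpace.single j (1 : ℝ))
  rw [EuclideanSpace.inner_single_right] at h
  simpa [pdR] using h

lemma inner_gradient_eq_sum_pdR (v : E3) (u : E3 → ℝ) (x : E3) :
    ⟪v, gradient u x⟫ = ∑ j, v j * pdR u j x := by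
  simp only [PiLp.inner_apply, RCLike.inner_apply, conj_trivial, gradient_apply_eq_pdR, mul_comm]

lemma gradient_inner_add (ξ : E3) (hθ : DifferentiableAt ℝ θ x) :
    gradient (fun z => ⟪z, ξ⟫ + θ z) x = ξ + gradient θ x := by
  refine HasGradientAt.gradient ?_
  rw [hasGradientAt_iff_hasFDerivAt, map_add, toDual_gradient]
  have hinner : (fun z : E3 => ⟪z, ξ⟫) = InnerProductSpace.toDual ℝ E3 ξ :=
    funext fun z => real_inner_comm ξ z
  exact (hinner ▸ (InnerProductSpace.toDual ℝ E3 ξ).hasFDerivAt).add hθ.hasFDerivAt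

end PartialDerivatives

theorem hamA_cexp_mul (A : E3 → E3) {θ : E3 → ℝ} {u : E3 → ℂ} (hθ : ContDiff ℝ 2 θ)
    (hu : ContDiff ℝ 2 u) (x : E3) :
    hamA A (fun y => Complex.exp (Complex.I * θ y) * u y) x
      = Complex.exp (Complex.I * θ x) *
          (-lapC u x + Complex.I * ((divg A x - lapR θ x : ℝ) : ℂ) * u x
            + 2 * Complex.I * ∑ j : Fin 3, ((A x j - pdR θ j x : ℝ) : ℂ) * pdC u j x
            + ((∑ j : Fin 3, (A x j - pdR θ j x) ^ 2 : ℝ) : ℂ) * u x) := by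
  have hθd : Differentiable ℝ θ := hθ.differentiable two_ne_zero
  have hθ'd : ∀ j, Differentiable ℝ (pdR θ j) := fun j =>
    (hθ.pdR (n := 1) j).differentiable one_ne_zero
  have hud : Differentiable ℝ u := hu.differentiable two_ne_zero
  have hu'd : ∀ j, Differentiable ℝ (pdC u j) := fun j =>
    (hu.pdC (n := 1) j).differentiable one_ne_zero
  have hfirst : ∀ j, pdC (fun y => Complex.exp (Complex.I * θ y) * u y) j
      = fun y => Complex.exp (Complex.I * θ y) * (Complex.I * pdR θ j y * u y + pdC u j y) :=
    fun j => funext fun y => by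
      rw [pdC_mul (by fun_prop) (hud y), pdC_cexp_I_mul (hθd y)]
      ring
  have hsecond : ∀ j, pdC (pdC (fun y => Complex.exp (Complex.I * θ y) * u y) j) j x
      = Complex.exp (Complex.I * θ x) *
          (Complex.I * pdR θ j x * (Complex.I * pdR θ j x * u x + pdC u j x)
            + (Complex.I * (pdR (pdR θ j) j x * u x + pdR θ j x * pdC u j x)
              + pdC (pdC u j) j x)) := fun j => by
    have hθ'dx := hθ'd j x
    have hu'dx := hu'd j x
    rw [hfirst, pdC_mul (by fun_prop) (by fun_prop), pdC_cexp_I_mul (hθd x),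
      pdC_add (by fun_prop) hu'dx, pdC_mul (by fun_prop) (hud x),
      pdC_const_mul _ (by fun_prop), pdC_ofReal hθ'dx]
    ring
  simp only [hamA, lapC, hsecond]
  simp only [hfirst, lapR, divg, Fin.sum_univ_three, EuclideanSpace.real_norm_sq_eq]
  push_cast
  ring_nf
  simp only [Complex.I_sq]
  ring

section PlaneWave

variable (A : E3 → E3) {θ η : E3 → ℝ} (ξ : E3) {x : E3}

theorem hamA_cexp_mul_sub_of_gradient_eventuallyEq (hθ : ContDiff ℝ 2 θ)
    (hη : ContDiff ℝ 2 η) (hgrad : gradient θ =ᶠ[𝓝 x] fun y => ξ + A y) :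
    hamA A (fun y => Complex.exp (Complex.I * θ y) * (η y : ℂ)) x
        - ((‖ξ‖ ^ 2 : ℝ) : ℂ) * (Complex.exp (Complex.I * θ x) * (η x : ℂ))
      = Complex.exp (Complex.I * θ x) *
          (-2 * Complex.I * ((⟪ξ, gradient η x⟫ : ℝ) : ℂ) - ((lapR η x : ℝ) : ℂ)) := by
  have hpdR : ∀ j, ∀ᶠ y in 𝓝 x, pdR θ j y = ξ j + A y j := fun j =>
    hgrad.mono fun y hy => by rw [← gradient_apply_eq_pdR, hy]; rfl
  have hdrift : ∀ j, A x j - pdR θ j x = -ξ j := fun j => by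
    rw [(hpdR j).self_of_nhds]
    ring
  have hdiv : divg A x = lapR θ x := Finset.sum_congr rfl fun j _ => by
    have hA : (fun y => A y j) =ᶠ[𝓝 x] fun y => pdR θ j y - ξ j :=
      (hpdR j).mono fun y hy => by simp only [hy]; ring
    rw [pdR, pdR, hA.fderiv_eq, fderiv_sub_const]
  rw [hamA_cexp_mul (u := fun y => (η y : ℂ)) A hθ (Complex.ofRealCLM.contDiff.comp hη) x,
    lapC_ofReal hη]
  simp only [hdrift, hdiv, sub_self, pdC_ofReal (hη.differentiable two_ne_zero x),
    inner_gradient_eq_sum_pdR, EuclideanSpace.real_norm_sq_eq, Fin.sum_univ_three]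
  push_cast
  ring

theorem hamA_cexp_mul_sub_of_flat (hθ : ContDiff ℝ 2 θ) (hη : ContDiff ℝ 2 η)
    (h0 : η x = 0) (h1 : ∀ j, pdR η j x = 0) (h2 : ∀ j, pdR (pdR η j) j x = 0) :
    hamA A (fun y => Complex.exp (Complex.I * θ y) * (η y : ℂ)) x
        - ((‖ξ‖ ^ 2 : ℝ) : ℂ) * (Complex.exp (Complex.I * θ x) * (η x : ℂ))
      = Complex.exp (Complex.I * θ x) *
          (-2 * Complex.I * ((⟪ξ, gradient η x⟫ : ℝ) : ℂ) - ((lapR η x : ℝ) : ℂ)) := by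
  rw [hamA_cexp_mul (u := fun y => (η y : ℂ)) A hθ (Complex.ofRealCLM.contDiff.comp hη) x,
    lapC_ofReal hη, inner_gradient_eq_sum_pdR]
  simp [lapR, pdC_ofReal (hη.differentiable two_ne_zero x), h0, h1, h2]

theorem hamA_planeWave_sub {R : ℝ} (hR : 0 < R) {Φ : E3 → ℝ} (hΦ : ContDiff ℝ 2 Φ)
    (hη : ContDiff ℝ 2 η) (hη0 : ∀ x : E3, ‖x‖ ≤ R → η x = 0)
    (hgrad : ∀ x : E3, R ≤ ‖x‖ → gradient Φ x = A x) (x : E3) :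
    hamA A (fun y => Complex.exp (Complex.I * ((⟪y, ξ⟫ + Φ y : ℝ) : ℂ)) * (η y : ℂ)) x
        - ((‖ξ‖ ^ 2 : ℝ) : ℂ) * (Complex.exp (Complex.I * ((⟪x, ξ⟫ + Φ x : ℝ) : ℂ)) * (η x : ℂ))
      = Complex.exp (Complex.I * ((⟪x, ξ⟫ + Φ x : ℝ) : ℂ)) *
          (-2 * Complex.I * ((⟪ξ, gradient η x⟫ : ℝ) : ℂ) - ((lapR η x : ℝ) : ℂ)) := by
  have hθ : ContDiff ℝ 2 fun y => ⟪y, ξ⟫ + Φ y := (contDiff_id.inner ℝ contDiff_const).add hΦ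
  rcases le_or_gt ‖x‖ R with hin | hout
  · have hball : Set.EqOn η 0 (Metric.closedBall 0 R) := fun y hy =>
      hη0 y (mem_closedBall_zero_iff.1 hy)
    have hx : x ∈ Metric.closedBall 0 R := mem_closedBall_zero_iff.2 hin
    have hpdR_zero := eqOn_pdR_zero_of_eqOn_zero_closedBall hR (hη.of_le one_le_two) hball
    exact hamA_cexp_mul_sub_of_flat A ξ hθ hη (hball hx) (fun j => hpdR_zero j hx)
      fun j => eqOn_pdR_zero_of_eqOn_zero_closedBall hR (hη.pdR (n := 1) j) (hpdR_zero j) j hx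
  · refine hamA_cexp_mul_sub_of_gradient_eventuallyEq A ξ hθ hη ?_
    filter_upwards [(isOpen_lt continuous_const continuous_norm).mem_nhds hout] with y hy
    rw [gradient_inner_add ξ (hΦ.differentiable two_ne_zero y), hgrad y hy.le]

end PlaneWave

theorem effective_perturbation_general (R : ℝ) (hR : 0 < R) (A : E3 → E3) (Φ η : E3 → ℝ)
    (hΦ : ContDiff ℝ (⊤ : ℕ∞) Φ)
    (hη : ContDiff ℝ (⊤ : ℕ∞) η) (hη0 : ∀ x : E3, ‖x‖ ≤ R → η x = 0)
    (hgrad : ∀ x : E3, R ≤ ‖x‖ → gradient Φ x = A x) (ξ : E3) :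
    (∀ x : E3,
        hamA A (fun y : E3 =>
            Complex.exp (Complex.I * ((⟪y, ξ⟫ + Φ y : ℝ) : ℂ)) * (η y : ℂ)) x
          - ((‖ξ‖^2 : ℝ) : ℂ) *
              (Complex.exp (Complex.I * ((⟪x, ξ⟫ + Φ x : ℝ) : ℂ)) * (η x : ℂ))
        = Complex.exp (Complex.I * ((⟪x, ξ⟫ + Φ x : ℝ) : ℂ)) *
            (-2 * Complex.I * ((⟪ξ, gradient η x⟫ : ℝ) : ℂ) - ((lapR η x : ℝ) : ℂ))) ∧
    Function.support (fun x : E3 =>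
        hamA A (fun y : E3 =>
            Complex.exp (Complex.I * ((⟪y, ξ⟫ + Φ y : ℝ) : ℂ)) * (η y : ℂ)) x
          - ((‖ξ‖^2 : ℝ) : ℂ) *
              (Complex.exp (Complex.I * ((⟪x, ξ⟫ + Φ x : ℝ) : ℂ)) * (η x : ℂ)))
      ⊆ Function.support (fun x : E3 => gradient η x)
          ∪ Function.support (fun x : E3 => lapR η x) := by
  have hsmooth : (2 : WithTop ℕ∞) ≤ (⊤ : ℕ∞) := WithTop.coe_le_coe.2 le_top
  have hidentity := hamA_planeWave_sub A ξ hR (hΦ.of_le hsmooth) (hη.of_le hsmooth) hη0 hgrad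
  refine ⟨hidentity, fun x hx => ?_⟩
  by_contra hcut
  simp only [Set.mem_union, Function.mem_support, not_or, not_not] at hcut
  exact hx (by beta_reduce; rw [hidentity x, hcut.1, hcut.2]; simp)

/-- Let `A`, `Φ` be `C^∞` on `ℝ³`, `η` a `C^∞` cut-off vanishing on
`{|x| ≤ R}`, and assume `∇Φ = A` for `|x| ≥ R`. For `Ψ(x) = exp(i(⟨x,ξ⟩ + Φ(x))) η(x)` one
has, for every `x ∈ ℝ³`,
`((D−A)²Ψ)(x) − |ξ|²Ψ(x) = exp(i(⟨x,ξ⟩ + Φ(x))) (−2i⟨ξ, ∇η(x)⟩ − Δη(x))`;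
in particular the effective perturbation is supported in the support of `(∇η, Δη)`. -/
theorem effective_perturbation (R : ℝ) (hR : 0 < R) (A : E3 → E3) (Φ η : E3 → ℝ)
    (hA : ContDiff ℝ (⊤ : ℕ∞) A) (hΦ : ContDiff ℝ (⊤ : ℕ∞) Φ)
    (hη : ContDiff ℝ (⊤ : ℕ∞) η) (hη0 : ∀ x : E3, ‖x‖ ≤ R → η x = 0)
    (hgrad : ∀ x : E3, R ≤ ‖x‖ → gradient Φ x = A x) (ξ : E3) :
    (∀ x : E3,
        hamA A (fun y : E3 =>
            Complex.exp (Complex.I * ((⟪y, ξ⟫ + Φ y : ℝ) : ℂ)) * (η y : ℂ)) x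
          - ((‖ξ‖^2 : ℝ) : ℂ) *
              (Complex.exp (Complex.I * ((⟪x, ξ⟫ + Φ x : ℝ) : ℂ)) * (η x : ℂ))
        = Complex.exp (Complex.I * ((⟪x, ξ⟫ + Φ x : ℝ) : ℂ)) *
            (-2 * Complex.I * ((⟪ξ, gradient η x⟫ : ℝ) : ℂ) - ((lapR η x : ℝ) : ℂ))) ∧
    Function.support (fun x : E3 =>
        hamA A (fun y : E3 =>
            Complex.exp (Complex.I * ((⟪y, ξ⟫ + Φ y : ℝ) : ℂ)) * (η y : ℂ)) x
          - ((‖ξ‖^2 : ℝ) : ℂ) *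
              (Complex.exp (Complex.I * ((⟪x, ξ⟫ + Φ x : ℝ) : ℂ)) * (η x : ℂ)))
      ⊆ Function.support (fun x : E3 => gradient η x)
          ∪ Function.support (fun x : E3 => lapR η x) :=
  effective_perturbation_general R hR A Φ η hΦ hη hη0 hgrad ξ
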